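/- arXiv:2605.08096 — 10 statements merged into one kernel-verified Lean document; each statement's English description precedes it below -/
import Mathlib

section
/- Let n ≥ 2, let σ : ℂ → ℂ be a field endomorphism (a unital ring homomorphism), and let P, Q ∈ M_n(ℂ) be invertible. Then the map Φ : M_n(ℂ) → M_n(ℂ) defined by Φ(A) = P · σ(Aᵀ) · Q (σ applied entrywise to the transpose of A) does not preserve mutual strong Birkhoff–James orthogonality in one direction; that is, there exist A, B ∈ M_n(ℂ) with A ⊥⊥ B but not Φ(A) ⊥⊥ Φ(B). -/
open Matrix
open scoped Matrix.Norms.L2Operator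

/-- `a` is strongly Birkhoff–James orthogonal to `b`. -/
def StrongBJ {𝔄 : Type*} [NormedRing 𝔄] (a b : 𝔄) : Prop :=
  ∀ c : 𝔄, ‖a‖ ≤ ‖a + b * c‖

/-- `a` and `b` are mutually strongly Birkhoff–James orthogonal. -/
def MutualBJ {𝔄 : Type*} [NormedRing 𝔄] (a b : 𝔄) : Prop :=
  StrongBJ a b ∧ StrongBJ b a

/-! With `E i j` the matrix units, `E 0 0` and `E 1 0` are mutually strongly BJ orthogonal: left
multiplication by either one cannot touch the row in which the other has its only nonzero entry,
and the operator norm of a matrix dominates each of its entries. The map sends them to `P E 0 0 Q`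
and `P E 0 1 Q`, and `P E 0 0 Q = P E 0 1 Q * (Q⁻¹ E 1 0 Q)` lies in the right ideal generated by
`P E 0 1 Q`; an element `a ≠ 0` is never strongly orthogonal to a `b` with `a ∈ b 𝔄`, because
`a + b c = 0` for a suitable `c`. -/

theorem StrongBJ.eq_zero_of_eq_mul {𝔄 : Type*} [NormedRing 𝔄] {a b d : 𝔄}
    (h : StrongBJ a b) (had : a = b * d) : a = 0 := by
  simpa [← had] using h (-d)

namespace Matrix

variable {𝕜 m n : Type*} [RCLike 𝕜] [Fintype m] [Fintype n] [DecidableEq n]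

lemma norm_apply_le_l2_opNorm (A : Matrix m n 𝕜) (i : m) (j : n) : ‖A i j‖ ≤ ‖A‖ := by
  have h := A.l2_opNorm_mulVec (PiLp.single 2 j 1)
  rw [PiLp.norm_single, norm_one, mul_one] at h
  refine le_trans (le_of_eq ?_) ((PiLp.norm_apply_le _ i).trans h)
  simp

lemma l2_opNorm_single [DecidableEq m] (i : m) (j : n) (a : 𝕜) : ‖single i j a‖ = ‖a‖ := by
  have hsq := l2_opNorm_conjTranspose_mul_self (single i j a)
  rw [conjTranspose_single, single_mul_single_same, ← diagonal_single, l2_opNorm_diagonal,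
    Pi.norm_single, norm_mul, norm_star] at hsq
  exact ((mul_self_inj (norm_nonneg _) (norm_nonneg _)).mp hsq).symm

variable [DecidableEq m]

lemma strongBJ_of_norm_le_apply {A B : Matrix m m 𝕜} {i j : m} (hA : ‖A‖ ≤ ‖A i j‖)
    (hB : ∀ k, B i k = 0) : StrongBJ A B := by
  intro C
  have hentry : (A + B * C) i j = A i j := by simp [mul_apply, hB]
  exact hA.trans (hentry ▸ norm_apply_le_l2_opNorm (A + B * C) i j)

lemma mutualBJ_single_single {i i' : m} (hi : i ≠ i') (j j' : m) (a b : 𝕜) :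
    MutualBJ (single i j a) (single i' j' b) :=
  ⟨strongBJ_of_norm_le_apply (j := j) (by rw [l2_opNorm_single, single_apply_same])
      fun k ↦ single_apply_of_row_ne hi.symm j' k b,
    strongBJ_of_norm_le_apply (j := j') (by rw [l2_opNorm_single, single_apply_same])
      fun k ↦ single_apply_of_row_ne hi j k a⟩

lemma not_strongBJ_mul_single_mul {P Q : Matrix m m 𝕜} (hP : IsUnit P) (hQ : IsUnit Q)
    (i j k : m) : ¬ StrongBJ (P * single i j 1 * Q) (P * single i k 1 * Q) := by
  intro h
  have hfactor : P * single i j 1 * Q = P * single i k 1 * Q * (Q⁻¹ * single k j 1 * Q) := by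
    simp only [mul_assoc, mul_nonsing_inv_cancel_left _ _ ((isUnit_iff_isUnit_det Q).mp hQ)]
    rw [← mul_assoc (single i k 1), single_mul_single_same, one_mul]
  have hzero := h.eq_zero_of_eq_mul hfactor
  rw [hQ.mul_left_eq_zero, hP.mul_right_eq_zero] at hzero
  simpa using congrFun (congrFun hzero i) j

end Matrix

theorem stmt8 {n : ℕ} (hn : 2 ≤ n) (σ : ℂ →+* ℂ) (P Q : Matrix (Fin n) (Fin n) ℂ)
    (hP : IsUnit P) (hQ : IsUnit Q) :
    ∃ A B : Matrix (Fin n) (Fin n) ℂ,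
      MutualBJ A B ∧ ¬ MutualBJ (P * (Aᵀ).map σ * Q) (P * (Bᵀ).map σ * Q) := by
  let i : Fin n := ⟨0, by omega⟩
  let i' : Fin n := ⟨1, by omega⟩
  have hi : i ≠ i' := by simp [i, i', Fin.ext_iff]
  refine ⟨single i i 1, single i' i 1, mutualBJ_single_single hi i i 1 1, fun h ↦ ?_⟩
  simp only [transpose_single, map_single, map_one] at h
  exact not_strongBJ_mul_single_mul hP hQ i i i' h.1
end

section
/- Let n ≥ 2, let σ : ℂ → ℂ be a field endomorphism (a unital ring homomorphism), and let P, Q ∈ M_n(ℂ) be invertible. If the map Φ : M_n(ℂ) → M_n(ℂ) defined by Φ(A) = P · σ(A) · Q (σ applied entrywise) preserves mutual strong Birkhoff–James orthogonality in one direction, then σ is either the identity on ℂ or complex conjugation, and P is a (nonzero) scalar multiple of a unitary matrix, i.e., P*P is a positive scalar multiple of the identity. -/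
/-!
For `y ≠ 0`, the rank-one operators `x ⊗ y*` and `u ⊗ y*` are mutually strongly
Birkhoff–James orthogonal exactly when `⟪x, u⟫ = 0`: evaluating `x ⊗ y* + (u ⊗ v*) C` at `y`
gives one direction, and choosing `C` with `x ⊗ y* + (u ⊗ v*) C = (x + t u) ⊗ y*` reduces the other
to Birkhoff–James orthogonality of vectors, which in a Hilbert space is ordinary orthogonality.

Since `Φ (x 𝟙ᵀ) = P σ(x) (𝟙ᵀ Q)`, the map `Φ` therefore sends orthogonal pairs `x ⊥ u` to
orthogonal pairs `P σ(x) ⊥ P σ(u)`, i.e. the form `(x, u) ↦ σ(x)* (P* P) σ(u)` vanishes on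
orthogonal pairs. Testing it on `eᵢ ⊥ eⱼ` and on `eᵢ + t eⱼ ⊥ -t̄ eᵢ + eⱼ` shows that `P* P` is a
scalar matrix, necessarily positive, and that `σ` commutes with conjugation. Such a `σ` maps `ℝ`
into itself, hence fixes `ℝ` pointwise, and so is the identity or the conjugation.
-/

open Matrix
open scoped Matrix.Norms.L2Operator

section Transfer

variable {𝔄 𝔅 F : Type*} [NormedRing 𝔄] [NormedRing 𝔅] [EquivLike F 𝔄 𝔅]
  [RingEquivClass F 𝔄 𝔅]

lemma strongBJ_map_iff (e : F) (he : ∀ a, ‖e a‖ = ‖a‖) {a b : 𝔄} :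
    StrongBJ (e a) (e b) ↔ StrongBJ a b := by
  simp only [StrongBJ, (EquivLike.surjective e).forall, ← map_mul, ← map_add, he]

lemma mutualBJ_map_iff (e : F) (he : ∀ a, ‖e a‖ = ‖a‖) {a b : 𝔄} :
    MutualBJ (e a) (e b) ↔ MutualBJ a b :=
  and_congr (strongBJ_map_iff e he) (strongBJ_map_iff e he)

end Transfer

section InnerProductSpace

open InnerProductSpace

variable {𝕜 E : Type*} [RCLike 𝕜] [NormedAddCommGroup E] [InnerProductSpace 𝕜 E]

local notation "⟪" x ", " y "⟫" => inner 𝕜 x y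

lemma inner_eq_zero_of_forall_norm_le_norm_add_smul {x u : E}
    (h : ∀ t : 𝕜, ‖x‖ ≤ ‖x + t • u‖) : ⟪x, u⟫ = 0 := by
  have hmin : ‖x - 0‖ = ⨅ w : 𝕜 ∙ u, ‖x - w‖ := by
    refine le_antisymm (le_ciInf fun ⟨w, hw⟩ => ?_) (ciInf_le ⟨0, ?_⟩ 0)
    · obtain ⟨t, rfl⟩ := Submodule.mem_span_singleton.mp hw
      simpa [sub_eq_add_neg, ← neg_smul] using h (-t)
    · rintro _ ⟨w, rfl⟩
      exact norm_nonneg _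
  simpa using (Submodule.norm_eq_iInf_iff_inner_eq_zero _ (Submodule.zero_mem _)).mp hmin u
    (Submodule.mem_span_singleton_self u)

lemma strongBJ_rankOne_of_inner_eq_zero {x u : E} (y v : E) (h : ⟪x, u⟫ = 0) :
    StrongBJ (rankOne 𝕜 x y) (rankOne 𝕜 u v) := by
  intro C
  set T := rankOne 𝕜 x y + rankOne 𝕜 u v * C
  have hT : ⟪x, T y⟫ = ⟪y, y⟫ * ⟪x, x⟫ := by
    simp [T, inner_add_right, inner_smul_right, h]
  have key : (‖x‖ * ‖y‖) ^ 2 ≤ ‖x‖ * ‖y‖ * ‖T‖ :=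
    calc (‖x‖ * ‖y‖) ^ 2 = ‖⟪x, T y⟫‖ := by
          rw [hT, norm_mul, inner_self_eq_norm_sq_to_K, inner_self_eq_norm_sq_to_K]
          simp only [norm_pow, RCLike.norm_ofReal, abs_norm]
          ring
      _ ≤ ‖x‖ * ‖T y‖ := norm_inner_le_norm _ _
      _ ≤ ‖x‖ * (‖T‖ * ‖y‖) := by gcongr; exact T.le_opNorm y
      _ = ‖x‖ * ‖y‖ * ‖T‖ := by ring
  rw [norm_rankOne]
  nlinarith [norm_nonneg T, mul_nonneg (norm_nonneg x) (norm_nonneg y)]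

lemma inner_eq_zero_of_strongBJ_rankOne {x u y v : E} (hy : y ≠ 0) (hv : v ≠ 0)
    (h : StrongBJ (rankOne 𝕜 x y) (rankOne 𝕜 u v)) : ⟪x, u⟫ = 0 := by
  refine inner_eq_zero_of_forall_norm_le_norm_add_smul fun t => ?_
  have hsum : rankOne 𝕜 x y + rankOne 𝕜 u v * rankOne 𝕜 ((t / ⟪v, v⟫) • v) y
      = rankOne 𝕜 (x + t • u) y := by
    rw [ContinuousLinearMap.mul_def, rankOne_comp_rankOne, inner_smul_right,
      div_mul_cancel₀ _ (inner_self_ne_zero.mpr hv), map_add, map_smul]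
    rfl
  have := h (rankOne 𝕜 ((t / ⟪v, v⟫) • v) y)
  rw [hsum, norm_rankOne, norm_rankOne] at this
  exact le_of_mul_le_mul_right this (norm_pos_iff.mpr hy)

lemma mutualBJ_rankOne_iff {x u y : E} (hy : y ≠ 0) :
    MutualBJ (rankOne 𝕜 x y) (rankOne 𝕜 u y) ↔ ⟪x, u⟫ = 0 :=
  ⟨fun h => inner_eq_zero_of_strongBJ_rankOne hy hy h.1, fun h =>
    ⟨strongBJ_rankOne_of_inner_eq_zero y y h,
      strongBJ_rankOne_of_inner_eq_zero y y (inner_eq_zero_symm.mp h)⟩⟩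

end InnerProductSpace

lemma map_vecMulVec {R S F m n : Type*} [Mul R] [Mul S] [FunLike F R S] [MulHomClass F R S]
    (σ : F) (x : m → R) (y : n → R) :
    (vecMulVec x y).map σ = vecMulVec (σ ∘ x) (σ ∘ y) := by
  ext i j
  simp [vecMulVec_apply]

lemma comp_single_add_single {ι M N F : Type*} [DecidableEq ι] [AddZeroClass M] [AddZeroClass N]
    [FunLike F M N] [AddMonoidHomClass F M N] (σ : F) (i j : ι) (a b : M) :
    σ ∘ (Pi.single i a + Pi.single j b) = Pi.single i (σ a) + Pi.single j (σ b) := by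
  ext k
  simp [Pi.single_apply, apply_ite σ]

section TwistedOrthogonality

variable {R ι : Type*} [CommRing R] [StarRing R] [Fintype ι] [DecidableEq ι]

def PreservesOrthogonality (σ : R →+* R) (H : Matrix ι ι R) : Prop :=
  ∀ x u : ι → R, star x ⬝ᵥ u = 0 → star (σ ∘ x) ⬝ᵥ (H *ᵥ (σ ∘ u)) = 0

lemma star_single_add_single_dotProduct_mulVec (H : Matrix ι ι R) (i j : ι) (a b c d : R) :
    star (Pi.single i a + Pi.single j b) ⬝ᵥ (H *ᵥ (Pi.single i c + Pi.single j d)) =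
      star a * H i i * c + star a * H i j * d + star b * H j i * c + star b * H j j * d := by
  simp only [star_add, Pi.star_single, mulVec_add, mulVec_single, dotProduct_add, add_dotProduct,
    single_dotProduct, Pi.smul_apply, col_apply, MulOpposite.smul_eq_mul_unop,
    MulOpposite.unop_op]
  ring

namespace PreservesOrthogonality

variable {σ : R →+* R} {H : Matrix ι ι R} {i j : ι}

lemma apply_eq_zero (hH : PreservesOrthogonality σ H) (hij : i ≠ j) : H i j = 0 := by
  have := hH (Pi.single i 1 + Pi.single j 0) (Pi.single i 0 + Pi.single j 1) (by simp [hij])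
  rw [comp_single_add_single, comp_single_add_single,
    star_single_add_single_dotProduct_mulVec] at this
  simpa using this

lemma star_map_mul_apply_self (hH : PreservesOrthogonality σ H) (hij : i ≠ j) (t : R) :
    star (σ t) * H j j = σ (star t) * H i i := by
  have := hH (Pi.single i 1 + Pi.single j t) (Pi.single i (-star t) + Pi.single j 1)
    (by simp [hij])
  rw [comp_single_add_single, comp_single_add_single, star_single_add_single_dotProduct_mulVec,
    hH.apply_eq_zero hij, hH.apply_eq_zero hij.symm] at this
  simp only [map_one, map_neg, star_one, one_mul, mul_one, mul_zero, zero_mul, add_zero] at this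
  linear_combination this

lemma eq_smul_one (hH : PreservesOrthogonality σ H) (i : ι) : H = H i i • 1 := by
  ext k l
  rcases eq_or_ne k l with rfl | hkl
  · rcases eq_or_ne i k with rfl | hik
    · simp
    · simpa using hH.star_map_mul_apply_self hik 1
  · simp [hH.apply_eq_zero hkl, hkl]

lemma map_star [IsDomain R] (hH : PreservesOrthogonality σ H) (hij : i ≠ j) (hi : H i i ≠ 0)
    (t : R) : σ (star t) = star (σ t) := by
  have hjj : H j j = H i i := by simpa using hH.star_map_mul_apply_self hij 1
  exact (mul_right_cancel₀ hi (hjj ▸ hH.star_map_mul_apply_self hij t)).symm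

end PreservesOrthogonality

end TwistedOrthogonality

section Matrix

open InnerProductSpace WithLp

variable {𝕜 ι : Type*} [RCLike 𝕜] [Fintype ι] [DecidableEq ι]

lemma toEuclideanCLM_vecMulVec (x y : ι → 𝕜) :
    toEuclideanCLM (n := ι) (𝕜 := 𝕜) (vecMulVec x y) =
      rankOne 𝕜 (toLp 2 x) (toLp 2 (star y)) := by
  ext1 z
  rw [← toLp_ofLp 2 z, toEuclideanCLM_toLp, rankOne_apply, EuclideanSpace.inner_toLp_toLp,
    star_star, vecMulVec_mulVec, dotProduct_comm]
  simp

lemma mutualBJ_vecMulVec_iff {x u y : ι → 𝕜} (hy : y ≠ 0) :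
    MutualBJ (vecMulVec x y) (vecMulVec u y) ↔ star x ⬝ᵥ u = 0 := by
  rw [← mutualBJ_map_iff (toEuclideanCLM (n := ι) (𝕜 := 𝕜)) fun _ => rfl,
    toEuclideanCLM_vecMulVec, toEuclideanCLM_vecMulVec,
    mutualBJ_rankOne_iff (by simpa using hy), EuclideanSpace.inner_toLp_toLp, dotProduct_comm]

lemma preservesOrthogonality_of_preserves_mutualBJ [Nonempty ι] (σ : 𝕜 →+* 𝕜)
    {P Q : Matrix ι ι 𝕜} (hQ : IsUnit Q)
    (hpres : ∀ A B : Matrix ι ι 𝕜, MutualBJ A B → MutualBJ (P * A.map σ * Q) (P * B.map σ * Q)) :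
    PreservesOrthogonality σ (Pᴴ * P) := by
  intro x u h
  have hσ1 : σ ∘ (1 : ι → 𝕜) = 1 := funext fun _ => map_one σ
  have himage (z : ι → 𝕜) :
      P * (vecMulVec z 1).map σ * Q = vecMulVec (P *ᵥ (σ ∘ z)) (1 ᵥ* Q) := by
    rw [map_vecMulVec, hσ1, mul_vecMulVec, vecMulVec_mul]
  have hQ1 : (1 : ι → 𝕜) ᵥ* Q ≠ 0 :=
    (vecMul_injective_of_isUnit hQ).ne_iff' (zero_vecMul Q) |>.mpr one_ne_zero
  have horth := hpres _ _ ((mutualBJ_vecMulVec_iff one_ne_zero).mpr h)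
  rw [himage, himage, mutualBJ_vecMulVec_iff hQ1, star_mulVec, dotProduct_mulVec,
    vecMul_vecMul] at horth
  rwa [← dotProduct_mulVec] at horth

end Matrix

open ComplexConjugate in
lemma Complex.ringHom_eq_id_or_conj_of_map_conj {σ : ℂ →+* ℂ}
    (hσ : ∀ z, σ (conj z) = conj (σ z)) : σ = RingHom.id ℂ ∨ σ = conj := by
  have him (r : ℝ) : (σ r).im = 0 := by
    rw [← Complex.conj_eq_iff_im, ← hσ, Complex.conj_ofReal]
  let τ : ℝ →+* ℝ :=
    { toFun r := (σ r).re
      map_one' := by simp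
      map_zero' := by simp
      map_mul' r s := by simp [Complex.mul_re, him]
      map_add' r s := by simp }
  have hreal (r : ℝ) : σ r = r :=
    Complex.ext (congrArg (· r) (Subsingleton.elim τ (RingHom.id ℝ))) (him r)
  have hsmul (r : ℝ) (z : ℂ) : σ (r • z) = r • σ z := by
    simp [Complex.real_smul, hreal]
  simpa only [DFunLike.ext_iff] using! Complex.real_algHom_eq_id_or_conj (AlgHom.mk' σ hsmul)

open scoped ComplexOrder

theorem stmt9 {n : ℕ} (hn : 2 ≤ n) (σ : ℂ →+* ℂ) (P Q : Matrix (Fin n) (Fin n) ℂ)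
    (hP : IsUnit P) (hQ : IsUnit Q)
    (hpres : ∀ A B : Matrix (Fin n) (Fin n) ℂ,
      MutualBJ A B → MutualBJ (P * A.map σ * Q) (P * B.map σ * Q)) :
    (σ = RingHom.id ℂ ∨ σ = starRingEnd ℂ) ∧
      ∃ c : ℝ, 0 < c ∧ Pᴴ * P = (c : ℂ) • (1 : Matrix (Fin n) (Fin n) ℂ) := by
  let i : Fin n := ⟨0, by omega⟩
  let j : Fin n := ⟨1, by omega⟩
  have hij : i ≠ j := by simp [i, j, Fin.ext_iff]
  have hH : PreservesOrthogonality σ (Pᴴ * P) :=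
    have : Nonempty (Fin n) := ⟨i⟩
    preservesOrthogonality_of_preserves_mutualBJ σ hQ hpres
  have hpos : 0 < (Pᴴ * P) i i :=
    (PosDef.conjTranspose_mul_self P (mulVec_injective_of_isUnit hP)).diag_pos
  obtain ⟨c, hc, hcP⟩ := RCLike.pos_iff_exists_ofReal.mp hpos
  refine ⟨Complex.ringHom_eq_id_or_conj_of_map_conj (hH.map_star hij hpos.ne'), c, hc, ?_⟩
  rw [hH.eq_smul_one i, ← hcP]
  rfl
end

section
/- Let 𝔄 = M_{n_1}(ℂ) ⊕ ⋯ ⊕ M_{n_k}(ℂ) and let J ⊆ {1,…,k}. Define the real-linear map † : 𝔄 → 𝔄 by (a^†)_i = a_i for i ∈ J and (a^†)_i = conj(a_i) (entrywise complex conjugation with respect to the standard basis) for i ∉ J. Then † preserves mutual strong Birkhoff–James orthogonality: if a ⊥⊥ b then a^† ⊥⊥ b^†. -/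
/-!
Strong Birkhoff–James orthogonality is phrased purely through addition, multiplication and
the norm, so it is transported by every isometric ring isomorphism. The map `†` is one:
blockwise it is either the identity or entrywise conjugation, which is a ring automorphism of
`M_m(ℂ)`, and conjugation preserves the ℓ²-operator norm because `conj (A x) = conj A (conj x)`
and conjugating a vector does not change its Euclidean norm.
-/

open Matrix
open scoped Matrix.Norms.L2Operator

/-- The finite-dimensional C*-algebra `M_{n 0}(ℂ) ⊕ ⋯ ⊕ M_{n (k-1)}(ℂ)`. -/
abbrev Alg (k : ℕ) (n : Fin k → ℕ) := ∀ i : Fin k, Matrix (Fin (n i)) (Fin (n i)) ℂ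

/-- The map `†`: identity on blocks indexed by `J`, entrywise conjugation elsewhere. -/
def dagger {k : ℕ} {n : Fin k → ℕ} (J : Finset (Fin k)) (a : Alg k n) : Alg k n :=
  fun i => if i ∈ J then a i else (a i).map (starRingEnd ℂ)

section RingEquiv

variable {A B : Type*} [NormedRing A] [NormedRing B]

theorem StrongBJ.map_ringEquiv (e : A ≃+* B) (he : ∀ x, ‖e x‖ = ‖x‖) {a b : A}
    (h : StrongBJ a b) : StrongBJ (e a) (e b) := by
  intro c
  have := h (e.symm c)
  rwa [← he a, ← he (a + _), map_add, map_mul, e.apply_symm_apply] at this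

theorem MutualBJ.map_ringEquiv (e : A ≃+* B) (he : ∀ x, ‖e x‖ = ‖x‖) {a b : A}
    (h : MutualBJ a b) : MutualBJ (e a) (e b) :=
  ⟨h.1.map_ringEquiv e he, h.2.map_ringEquiv e he⟩

end RingEquiv

theorem EuclideanSpace.norm_toLp_map_conj {𝕜 n : Type*} [RCLike 𝕜] [Fintype n] (x : n → 𝕜) :
    ‖WithLp.toLp 2 (starRingEnd 𝕜 ∘ x)‖ = ‖WithLp.toLp 2 x‖ := by
  simp [EuclideanSpace.norm_eq]

namespace Matrix

variable {𝕜 m n : Type*} [RCLike 𝕜] [Fintype m] [Fintype n] [DecidableEq n]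

theorem l2_opNorm_map_conj_le (A : Matrix m n 𝕜) : ‖A.map (starRingEnd 𝕜)‖ ≤ ‖A‖ := by
  rw [l2_opNorm_def (A.map _)]
  refine ContinuousLinearMap.opNorm_le_bound _ (norm_nonneg A) fun x => ?_
  change ‖WithLp.toLp 2 (A.map (starRingEnd 𝕜) *ᵥ x.ofLp)‖ ≤ _
  have hconj : A.map (starRingEnd 𝕜) *ᵥ x.ofLp =
      starRingEnd 𝕜 ∘ (A *ᵥ (starRingEnd 𝕜 ∘ x.ofLp)) := by
    funext i
    rw [Function.comp_apply, RingHom.map_mulVec]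
    simp [Function.comp_def]
  calc ‖WithLp.toLp 2 (A.map (starRingEnd 𝕜) *ᵥ x.ofLp)‖
      = ‖WithLp.toLp 2 (A *ᵥ (starRingEnd 𝕜 ∘ x.ofLp))‖ := by
        rw [hconj, EuclideanSpace.norm_toLp_map_conj]
    _ ≤ ‖A‖ * ‖WithLp.toLp 2 (starRingEnd 𝕜 ∘ x.ofLp)‖ :=
        l2_opNorm_mulVec A (WithLp.toLp 2 (starRingEnd 𝕜 ∘ x.ofLp))
    _ = ‖A‖ * ‖x‖ := by rw [EuclideanSpace.norm_toLp_map_conj, WithLp.toLp_ofLp]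

theorem l2_opNorm_map_conj (A : Matrix m n 𝕜) : ‖A.map (starRingEnd 𝕜)‖ = ‖A‖ := by
  refine (l2_opNorm_map_conj_le A).antisymm ?_
  simpa [Matrix.map_map, Function.comp_def] using l2_opNorm_map_conj_le (A.map (starRingEnd 𝕜))

end Matrix

section Dagger

variable {k : ℕ} {n : Fin k → ℕ}

def daggerRingEquiv (J : Finset (Fin k)) : Alg k n ≃+* Alg k n :=
  RingEquiv.piCongrRight fun i => if i ∈ J then RingEquiv.refl _ else starRingAut.mapMatrix

@[simp]
theorem daggerRingEquiv_apply (J : Finset (Fin k)) (a : Alg k n) :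
    daggerRingEquiv J a = dagger J a := by
  funext i
  by_cases hi : i ∈ J
  · simp [daggerRingEquiv, dagger, hi]
  · simp only [daggerRingEquiv, RingEquiv.piCongrRight_apply, hi, ↓reduceIte,
      RingEquiv.mapMatrix_apply, dagger]
    rfl

theorem norm_dagger (J : Finset (Fin k)) (a : Alg k n) : ‖dagger J a‖ = ‖a‖ := by
  have h : ∀ i, ‖dagger J a i‖₊ = ‖a i‖₊ := fun i => by
    by_cases hi : i ∈ J <;> simp [dagger, hi, ← NNReal.coe_inj, Matrix.l2_opNorm_map_conj]
  rw [Pi.norm_def, Pi.norm_def]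
  simp only [h]

end Dagger

theorem stmt10 {k : ℕ} (n : Fin k → ℕ) (J : Finset (Fin k)) (a b : Alg k n)
    (h : MutualBJ a b) : MutualBJ (dagger J a) (dagger J b) := by
  have hnorm : ∀ x : Alg k n, ‖daggerRingEquiv J x‖ = ‖x‖ := fun x => by
    rw [daggerRingEquiv_apply, norm_dagger]
  simpa only [daggerRingEquiv_apply] using h.map_ringEquiv (daggerRingEquiv J) hnorm
end

section
/- Let k ≥ 3 and let Φ = (φ_1,…,φ_k) : ℂ^k → ℂ^k be an additive surjection that preserves mutual strong Birkhoff–James orthogonality in one direction. Then there exist a positive real γ, a unitary u ∈ ℂ^k (i.e., |u_i| = 1 for all i), and a subset J ⊆ {1,…,k} such that φ_i(λ) = γ · u_i · λ for i ∈ J and φ_i(λ) = γ · u_i · conj(λ) for i ∉ J, for all λ ∈ ℂ. -/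
open ComplexConjugate

section NormMonotone

variable {E F : Type*} [NormedAddCommGroup E] [NormedSpace ℝ E]
  [NormedAddCommGroup F] [NormedSpace ℝ F]

theorem AddMonoidHom.continuous_of_norm_mono [Nontrivial E] (f : E →+ F)
    (hf : ∀ x y, ‖x‖ ≤ ‖y‖ → ‖f x‖ ≤ ‖f y‖) : Continuous f := by
  refine continuous_of_continuousAt_zero f (Metric.continuousAt_iff.2 fun ε hε => ?_)
  obtain ⟨y, hy⟩ := exists_norm_eq E zero_le_one
  obtain ⟨n, hn⟩ := exists_nat_gt (‖f y‖ / ε)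
  have hn0 : (0 : ℝ) < n := (div_nonneg (norm_nonneg _) hε.le).trans_lt hn
  refine ⟨1 / n, by positivity, fun x hx => ?_⟩
  rw [dist_zero_right] at hx
  rw [map_zero, dist_zero_right]
  have hnx : ‖n • x‖ ≤ ‖y‖ := by
    rw [hy, ← Nat.cast_smul_eq_nsmul ℝ, norm_smul, Real.norm_natCast]
    exact (lt_div_iff₀' hn0).1 (by simpa using hx) |>.le
  have hfnx : (n : ℝ) * ‖f x‖ ≤ ‖f y‖ := by
    have := hf _ _ hnx
    rwa [map_nsmul, ← Nat.cast_smul_eq_nsmul ℝ, norm_smul, Real.norm_natCast] at this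
  rw [div_lt_iff₀ hε] at hn
  nlinarith

theorem AddMonoidHom.norm_map_eq_of_norm_mono (f : E →+ F)
    (hf : ∀ x y, ‖x‖ ≤ ‖y‖ → ‖f x‖ ≤ ‖f y‖) {y : E} (hy : ‖y‖ = 1) (x : E) :
    ‖f x‖ = ‖x‖ * ‖f y‖ := by
  have : Nontrivial E := nontrivial_of_ne y 0 (by rintro rfl; simp at hy)
  have hxy : ‖‖x‖ • y‖ = ‖x‖ := by rw [norm_smul, hy, norm_norm, mul_one]
  calc ‖f x‖ = ‖f (‖x‖ • y)‖ := le_antisymm (hf _ _ hxy.ge) (hf _ _ hxy.le)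
    _ = ‖x‖ * ‖f y‖ := by
      rw [map_real_smul f (f.continuous_of_norm_mono hf), norm_smul, norm_norm]

end NormMonotone

theorem AddMonoidHom.exists_eq_mul_or_eq_mul_conj (g : ℂ →+ ℂ) {γ : ℝ} (hγ : 0 < γ)
    (hg : ∀ z, ‖g z‖ = γ * ‖z‖) :
    ∃ u : ℂ, ‖u‖ = 1 ∧ ((∀ z, g z = γ * u * z) ∨ ∀ z, g z = γ * u * conj z) := by
  have hγ' : (γ : ℂ) ≠ 0 := Complex.ofReal_ne_zero.2 hγ.ne'
  set h := (AddMonoidHom.mulLeft (γ⁻¹ : ℂ)).comp g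
  have hh : ∀ z, ‖h z‖ = ‖z‖ := fun z => by
    simp [h, hg, abs_of_pos hγ, hγ.ne']
  have hgh : ∀ z, g z = γ * h z := fun z => by simp [h, hγ']
  let L : ℂ →ₗᵢ[ℝ] ℂ :=
    ⟨(h.toRealLinearMap (AddMonoidHomClass.isometry_of_norm h hh).continuous).toLinearMap, hh⟩
  have hL : ∀ z, h z = L.toLinearIsometryEquiv rfl z := fun _ => rfl
  obtain ⟨a, ha | ha⟩ := linear_isometry_complex (L.toLinearIsometryEquiv rfl)
  · refine ⟨a, Circle.norm_coe a, Or.inl fun z => ?_⟩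
    rw [hgh, hL, ha, rotation_apply, mul_assoc]
  · refine ⟨a, Circle.norm_coe a, Or.inr fun z => ?_⟩
    rw [hgh, hL, ha, LinearIsometryEquiv.trans_apply, rotation_apply, Complex.conjLIE_apply,
      mul_assoc]

section Pi

variable {ι : Type*} [Fintype ι]

theorem StrongBJ.of_apply_eq_zero {R : Type*} [NormedRing R] {x y : ι → R} {i : ι}
    (hy : y i = 0) (hx : ∀ m, ‖x m‖ ≤ ‖x i‖) : StrongBJ x y := fun c =>
  calc ‖x‖ ≤ ‖x i‖ := (pi_norm_le_iff_of_nonneg (norm_nonneg _)).2 hx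
    _ = ‖(x + y * c) i‖ := by simp [hy]
    _ ≤ ‖x + y * c‖ := norm_le_pi_norm _ i

theorem StrongBJ.norm_le_norm_update_zero [DecidableEq ι] {𝕜 : Type*} [NormedDivisionRing 𝕜]
    {x y : ι → 𝕜} (h : StrongBJ x y) {j : ι} (hy : y j ≠ 0) :
    ‖x‖ ≤ ‖Function.update x j 0‖ := by
  convert h (Pi.single j (-(y j)⁻¹ * x j)) using 2
  ext m
  rcases eq_or_ne m j with rfl | hm
  · simp [hy]
  · simp [hm]

end Pi

section Preserver

variable {ι : Type*} [Fintype ι] [DecidableEq ι] {f : ι → ℂ →+ ℂ}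

theorem norm_apply_le_of_ne_of_strongBJ_preserving (hι : 3 ≤ ENat.card ι)
    (hpres : ∀ a b : ι → ℂ, MutualBJ a b → StrongBJ (fun i => f i (a i)) (fun i => f i (b i)))
    {i j : ι} (hij : i ≠ j) (hj : f j ≠ 0) {z w : ℂ} (hzw : ‖z‖ ≤ ‖w‖) :
    ‖f j z‖ ≤ ‖f i w‖ := by
  obtain ⟨l, hli, hlj⟩ := ENat.exists_ne_ne_of_three_le hι i j
  obtain ⟨ν, hν⟩ := DFunLike.ne_iff.1 hj
  set a : ι → ℂ := Pi.single i w + Pi.single j z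
  set b : ι → ℂ := Pi.single j ν + Pi.single l ν
  have hab : MutualBJ a b := by
    refine ⟨.of_apply_eq_zero (i := i) ?_ fun m => ?_, .of_apply_eq_zero (i := l) ?_ fun m => ?_⟩
    · simp [b, hij, hli.symm]
    · rcases eq_or_ne m i with rfl | hmi
      · rfl
      rcases eq_or_ne m j with rfl | hmj
      · simpa [a, hmi, hij] using hzw
      · simp [a, hmi, hmj]
    · simp [a, hli, hlj]
    · rcases eq_or_ne m j with rfl | hmj
      · simp [b, hlj.symm]
      rcases eq_or_ne m l with rfl | hml
      · rfl
      · simp [b, hmj, hml]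
  calc ‖f j z‖ = ‖f j (a j)‖ := by simp [a, hij.symm]
    _ ≤ ‖fun m => f m (a m)‖ := norm_le_pi_norm (fun m => f m (a m)) j
    _ ≤ ‖Function.update (fun m => f m (a m)) j 0‖ :=
      (hpres a b hab).norm_le_norm_update_zero (by simpa [b, hlj.symm] using hν)
    _ ≤ ‖f i w‖ := (pi_norm_le_iff_of_nonneg (norm_nonneg _)).2 fun m => by
      rcases eq_or_ne m j with rfl | hmj
      · simp
      rcases eq_or_ne m i with rfl | hmi
      · simp [a, hmj]
      · simp [a, hmj, hmi]

theorem norm_apply_le_of_strongBJ_preserving (hι : 3 ≤ ENat.card ι)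
    (hpres : ∀ a b : ι → ℂ, MutualBJ a b → StrongBJ (fun i => f i (a i)) (fun i => f i (b i)))
    (hf : ∀ i, f i ≠ 0) (i j : ι) {z w : ℂ} (hzw : ‖z‖ ≤ ‖w‖) : ‖f j z‖ ≤ ‖f i w‖ := by
  obtain ⟨l, hli, hlj⟩ := ENat.exists_ne_ne_of_three_le hι i j
  calc ‖f j z‖ ≤ ‖f l z‖ := norm_apply_le_of_ne_of_strongBJ_preserving hι hpres hlj (hf j) le_rfl
    _ ≤ ‖f i w‖ := norm_apply_le_of_ne_of_strongBJ_preserving hι hpres hli.symm (hf l) hzw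

theorem exists_pos_norm_apply_eq_of_strongBJ_preserving (hι : 3 ≤ ENat.card ι)
    (hpres : ∀ a b : ι → ℂ, MutualBJ a b → StrongBJ (fun i => f i (a i)) (fun i => f i (b i)))
    (hf : ∀ i, f i ≠ 0) : ∃ γ : ℝ, 0 < γ ∧ ∀ i z, ‖f i z‖ = γ * ‖z‖ := by
  obtain ⟨i₀⟩ := (ENat.one_le_card_iff_nonempty ι).1 (le_trans (by norm_num) hι)
  have hle := norm_apply_le_of_strongBJ_preserving hι hpres hf
  have hnorm (i : ι) (z : ℂ) : ‖f i z‖ = ‖z‖ * ‖f i 1‖ :=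
    (f i).norm_map_eq_of_norm_mono (fun _ _ => hle i i) norm_one z
  refine ⟨‖f i₀ 1‖, norm_pos_iff.2 fun h => hf i₀ ?_, fun i z => ?_⟩
  · ext z
    simpa [h] using hnorm i₀ z
  · rw [hnorm, mul_comm, le_antisymm (hle i₀ i le_rfl) (hle i i₀ le_rfl)]

end Preserver

theorem stmt11 {k : ℕ} (hk : 3 ≤ k) (φ : Fin k → ℂ → ℂ)
    (Φ : (Fin k → ℂ) → (Fin k → ℂ)) (hΦ : ∀ x i, Φ x i = φ i (x i))
    (hadd : ∀ x y, Φ (x + y) = Φ x + Φ y) (hsurj : Function.Surjective Φ)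
    (hpres : ∀ a b : Fin k → ℂ, MutualBJ a b → MutualBJ (Φ a) (Φ b)) :
    ∃ (γ : ℝ) (u : Fin k → ℂ) (J : Finset (Fin k)),
      0 < γ ∧ (∀ i, ‖u i‖ = 1) ∧
      ∀ i z, φ i z = if i ∈ J then γ * u i * z else γ * u i * (starRingEnd ℂ) z := by
  obtain rfl : Φ = fun x i => φ i (x i) := funext fun x => funext (hΦ x)
  let f (i : Fin k) : ℂ →+ ℂ :=
    AddMonoidHom.mk' (φ i) fun z w => by simpa using congrFun (hadd (fun _ => z) fun _ => w) i
  have hf (i : Fin k) : f i ≠ 0 := fun hi => by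
    obtain ⟨x, hx⟩ := hsurj 1
    exact one_ne_zero ((congrFun hx i).symm.trans (DFunLike.congr_fun hi (x i)))
  obtain ⟨γ, hγ, hnorm⟩ := exists_pos_norm_apply_eq_of_strongBJ_preserving (f := f)
    (by simpa using hk) (fun a b h => (hpres a b h).1) hf
  choose u hu hform using fun i => (f i).exists_eq_mul_or_eq_mul_conj hγ (hnorm i)
  classical
  refine ⟨γ, u, {i | ∀ z, φ i z = γ * u i * z}.toFinset, hγ, hu, fun i z => ?_⟩
  split_ifs with hi
  · exact Set.mem_toFinset.1 hi z
  · exact (hform i).resolve_left (by simpa [f] using hi) z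
end

section
/- Let n ≥ 2 and let Φ = (φ_1, φ_2) : ℂ ⊕ M_n(ℂ) → ℂ ⊕ M_n(ℂ) be an additive map preserving mutual strong Birkhoff–James orthogonality in one direction, where φ_2(A) = A·Q for some invertible matrix Q ∈ M_n(ℂ) and φ_1 : ℂ → ℂ is additive. Then Q is a scalar multiple of a unitary matrix, ‖Q‖ = |φ_1(1)|, and either φ_1(λ) = φ_1(1)·λ for all λ ∈ ℂ or φ_1(λ) = φ_1(1)·conj(λ) for all λ ∈ ℂ. -/
open Matrix
open scoped Matrix.Norms.L2Operator

/-!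
Transport the problem along the isometric *-isomorphism `Mₙ(ℂ) ≃ B(ℂⁿ)`, so that
`Φ (λ, A) = (φ λ, A T)`, and fix orthonormal vectors `x, v`. For orthonormal `f, g` the elements
`(1, |x⟩⟨x|)` and `(0, |x⟩⟨f| + |v⟩⟨g|)` are mutually orthogonal. In their images, right
multiplication by a multiple of `|T*x⟩⟨T*f|` cancels the `x`-row, leaving
`‖|x⟩⟨T*f| + |v⟩⟨T*g|‖ ≤ ‖T*g‖`; evaluating at `T*g` forces `⟪T*f, T*g⟫ = 0`. So `T*` preserves
orthogonality, hence `‖T* w‖ = γ ‖w‖` with `γ = ‖T‖`, which makes `T / γ` unitary. Two more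
orthogonal pairs built from `‖λ‖ |x⟩⟨x|` squeeze `|φ λ| = γ |λ|`, and an additive map of `ℂ`
scaling all norms by `γ` is `ℝ`-linear, hence `φ 1` times the identity or the conjugation.
-/

open InnerProductSpace ContinuousLinearMap
open scoped ComplexConjugate

def PreservesMutualBJ {A B : Type*} [NormedRing A] [NormedRing B] (Φ : A → B) : Prop :=
  ∀ a b, MutualBJ a b → MutualBJ (Φ a) (Φ b)

section Transfer

variable {A B : Type*} [NormedRing A] [NormedRing B] (e : A ≃+* B)

lemma StrongBJ.map (he : ∀ a, ‖e a‖ = ‖a‖) {a b : A} (h : StrongBJ a b) :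
    StrongBJ (e a) (e b) := by
  intro c
  rw [← e.apply_symm_apply c, ← map_mul, ← map_add, he, he]
  exact h _

lemma MutualBJ.map (he : ∀ a, ‖e a‖ = ‖a‖) {a b : A} (h : MutualBJ a b) :
    MutualBJ (e a) (e b) :=
  ⟨h.1.map e he, h.2.map e he⟩

lemma PreservesMutualBJ.conj (he : ∀ a, ‖e a‖ = ‖a‖) {Φ : A → A} {Ψ : B → B}
    (hΦ : PreservesMutualBJ Φ) (hΨ : ∀ a, Ψ (e a) = e (Φ a)) : PreservesMutualBJ Ψ := by
  intro a b h
  have he' : ∀ b, ‖e.symm b‖ = ‖b‖ := fun b => by rw [← he, e.apply_symm_apply]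
  have := (hΦ _ _ (h.map e.symm he')).map e he
  rwa [← hΨ, ← hΨ, e.apply_symm_apply, e.apply_symm_apply] at this

end Transfer

lemma preservesMutualBJ_toEuclideanCLM {𝕜 n : Type*} [RCLike 𝕜] [Fintype n] [DecidableEq n]
    {φ : 𝕜 → 𝕜} {Q : Matrix n n 𝕜}
    (h : PreservesMutualBJ fun a : 𝕜 × Matrix n n 𝕜 => (φ a.1, a.2 * Q)) :
    PreservesMutualBJ fun a : 𝕜 × (EuclideanSpace 𝕜 n →L[𝕜] EuclideanSpace 𝕜 n) =>
      (φ a.1, a.2 * toEuclideanCLM (n := n) (𝕜 := 𝕜) Q) :=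
  let e : 𝕜 × Matrix n n 𝕜 ≃+* 𝕜 × (EuclideanSpace 𝕜 n →L[𝕜] EuclideanSpace 𝕜 n) :=
    (RingEquiv.refl 𝕜).prodCongr toEuclideanCLM.toRingEquiv
  have he : ∀ a, ‖e a‖ = ‖a‖ := fun _ => rfl
  h.conj e he fun _ => Prod.ext rfl (map_mul (toEuclideanCLM (n := n) (𝕜 := 𝕜)) _ _).symm

section Product

variable {R S : Type*} [NormedRing R] [NormedRing S]

lemma strongBJ_of_norm_le_fst {a b : R × S} (ha : ‖a‖ ≤ ‖a.1‖) (hb : b.1 = 0) : StrongBJ a b :=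
  fun c => ha.trans <| by simpa [hb] using norm_fst_le (a + b * c)

end Product

section InnerProduct

variable {𝕜 E : Type*} [RCLike 𝕜] [NormedAddCommGroup E] [InnerProductSpace 𝕜 E]

lemma norm_le_norm_add_of_inner_eq_zero {x y : E} (h : ⟪x, y⟫_𝕜 = 0) : ‖x‖ ≤ ‖x + y‖ := by
  have := norm_add_sq_eq_norm_sq_add_norm_sq_of_inner_eq_zero x y h
  nlinarith [norm_nonneg x, norm_nonneg (x + y), mul_self_nonneg ‖y‖]

lemma norm_smul_add_smul_sq {x v : E} (hx : ‖x‖ = 1) (hv : ‖v‖ = 1) (hxv : ⟪x, v⟫_𝕜 = 0)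
    (α β : 𝕜) : ‖α • x + β • v‖ ^ 2 = ‖α‖ ^ 2 + ‖β‖ ^ 2 := by
  rw [@norm_add_sq 𝕜]
  simp [inner_smul_left, inner_smul_right, hxv, norm_smul, hx, hv]

lemma norm_inner_sq_add_norm_inner_sq_le {f g : E} (hf : ‖f‖ = 1) (hg : ‖g‖ = 1)
    (hfg : ⟪f, g⟫_𝕜 = 0) (u : E) : ‖⟪f, u⟫_𝕜‖ ^ 2 + ‖⟪g, u⟫_𝕜‖ ^ 2 ≤ ‖u‖ ^ 2 := by
  have hon : Orthonormal 𝕜 ![f, g] := by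
    rw [orthonormal_iff_ite]
    intro i j
    fin_cases i <;> fin_cases j <;>
      simp [hfg, inner_eq_zero_symm.1 hfg, inner_self_eq_norm_sq_to_K, hf, hg]
  simpa [Fin.sum_univ_two] using hon.sum_inner_products_le u (s := Finset.univ)

end InnerProduct

section Operator

variable {𝕜 H : Type*} [RCLike 𝕜] [NormedAddCommGroup H] [InnerProductSpace 𝕜 H]

lemma strongBJ_of_norm_le_norm_apply {a b : 𝕜 × (H →L[𝕜] H)} {x : H} (hx : ‖x‖ = 1)
    (ha : ‖a‖ ≤ ‖a.2 x‖) (hb : ∀ y, ⟪a.2 x, b.2 y⟫_𝕜 = 0) : StrongBJ a b := fun c =>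
  calc ‖a‖ ≤ ‖a.2 x‖ := ha
    _ ≤ ‖a.2 x + b.2 (c.2 x)‖ := norm_le_norm_add_of_inner_eq_zero (hb _)
    _ = ‖(a + b * c).2 x‖ := rfl
    _ ≤ ‖(a + b * c).2‖ := by simpa [hx] using (a + b * c).2.le_opNorm x
    _ ≤ ‖a + b * c‖ := norm_snd_le _

variable {x v : H}

lemma norm_rankOne_add_rankOne_le (hx : ‖x‖ = 1) (hv : ‖v‖ = 1) (hxv : ⟪x, v⟫_𝕜 = 0)
    {f g : H} (hf : ‖f‖ = 1) (hg : ‖g‖ = 1) (hfg : ⟪f, g⟫_𝕜 = 0) :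
    ‖rankOne 𝕜 x f + rankOne 𝕜 v g‖ ≤ 1 := by
  refine opNorm_le_bound _ zero_le_one fun u => ?_
  rw [one_mul, ← sq_le_sq₀ (norm_nonneg _) (norm_nonneg _), _root_.add_apply, rankOne_apply,
    rankOne_apply, norm_smul_add_smul_sq hx hv hxv]
  exact norm_inner_sq_add_norm_inner_sq_le hf hg hfg u

lemma inner_eq_zero_of_norm_rankOne_add_rankOne_le (hx : ‖x‖ = 1) (hv : ‖v‖ = 1)
    (hxv : ⟪x, v⟫_𝕜 = 0) {p q : H} (h : ‖rankOne 𝕜 x p + rankOne 𝕜 v q‖ ≤ ‖q‖) :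
    ⟪p, q⟫_𝕜 = 0 := by
  have hq := (le_opNorm _ q).trans (mul_le_mul_of_nonneg_right h (norm_nonneg q))
  rw [← sq_le_sq₀ (norm_nonneg _) (by positivity), _root_.add_apply, rankOne_apply, rankOne_apply,
    norm_smul_add_smul_sq hx hv hxv, inner_self_eq_norm_sq_to_K] at hq
  simp only [norm_pow, RCLike.norm_ofReal, abs_norm] at hq
  rw [← norm_eq_zero, ← sq_eq_zero_iff]
  nlinarith [sq_nonneg ‖⟪p, q⟫_𝕜‖]

lemma strongBJ_smul_rankOne_self (hx : ‖x‖ = 1) (hxv : ⟪x, v⟫_𝕜 = 0) (z w : 𝕜) :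
    StrongBJ (z, (‖z‖ : 𝕜) • rankOne 𝕜 x x) (w, (‖w‖ : 𝕜) • rankOne 𝕜 v v) :=
  strongBJ_of_norm_le_norm_apply hx (by simp [norm_smul, hx]) fun y => by
    simp [inner_smul_left, inner_smul_right, hxv]

end Operator

section OrthogonalityPreserving

variable {𝕜 E F : Type*} [RCLike 𝕜] [NormedAddCommGroup E] [InnerProductSpace 𝕜 E]
  [NormedAddCommGroup F] [InnerProductSpace 𝕜 F] {A : E →ₗ[𝕜] F}

lemma LinearMap.inner_map_map_eq_zero_of_orthonormal
    (hA : ∀ f g : E, ‖f‖ = 1 → ‖g‖ = 1 → ⟪f, g⟫_𝕜 = 0 → ⟪A f, A g⟫_𝕜 = 0)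
    {f g : E} (hfg : ⟪f, g⟫_𝕜 = 0) : ⟪A f, A g⟫_𝕜 = 0 := by
  rcases eq_or_ne f 0 with rfl | hf
  · simp
  rcases eq_or_ne g 0 with rfl | hg
  · simp
  have h := hA _ _ (norm_smul_inv_norm (𝕜 := 𝕜) hf) (norm_smul_inv_norm (𝕜 := 𝕜) hg)
    (by simp [inner_smul_left, inner_smul_right, hfg])
  simpa [inner_smul_left, inner_smul_right, hf, hg] using h

lemma LinearMap.norm_map_eq_of_inner_eq_zero
    (hA : ∀ f g : E, ⟪f, g⟫_𝕜 = 0 → ⟪A f, A g⟫_𝕜 = 0)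
    {u w : E} (huw : ⟪u, w⟫_𝕜 = 0) (hn : ‖u‖ = ‖w‖) : ‖A u‖ = ‖A w‖ := by
  have hwu := inner_eq_zero_symm.1 huw
  have h := hA (u + w) (u - w) (by
    simp [inner_add_left, inner_sub_right, huw, hwu, inner_self_eq_norm_sq_to_K, hn])
  rw [map_add, map_sub, inner_add_left, inner_sub_right, inner_sub_right, hA _ _ huw,
    hA _ _ hwu, inner_self_eq_norm_sq_to_K, inner_self_eq_norm_sq_to_K, sub_zero, zero_sub,
    ← sub_eq_add_neg, sub_eq_zero] at h
  exact (pow_left_inj₀ (norm_nonneg _) (norm_nonneg _) two_ne_zero).1 (by exact_mod_cast h)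

lemma LinearMap.norm_map_eq_mul_norm_of_inner_eq_zero
    (hA : ∀ f g : E, ⟪f, g⟫_𝕜 = 0 → ⟪A f, A g⟫_𝕜 = 0)
    {u : E} (hu : ‖u‖ = 1) (w : E) : ‖A w‖ = ‖A u‖ * ‖w‖ := by
  set c := ⟪u, w⟫_𝕜
  set w' := w - c • u
  have hw' : ⟪u, w'⟫_𝕜 = 0 := by
    simp [w', c, inner_sub_right, inner_smul_right, inner_self_eq_norm_sq_to_K, hu]
  have hw'A : ‖A w'‖ = ‖A u‖ * ‖w'‖ := by
    have := norm_map_eq_of_inner_eq_zero hA (u := (‖w'‖ : 𝕜) • u) (w := w')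
      (by simp [inner_smul_left, hw']) (by simp [norm_smul, hu])
    simpa [norm_smul, mul_comm] using this.symm
  have hcu : ⟪c • u, w'⟫_𝕜 = 0 := by simp [inner_smul_left, hw']
  have hw : w = c • u + w' := by simp [w']
  have h1 := norm_add_sq_eq_norm_sq_add_norm_sq_of_inner_eq_zero _ _ hcu
  have h2 := norm_add_sq_eq_norm_sq_add_norm_sq_of_inner_eq_zero _ _ (hA _ _ hcu)
  rw [← map_add, ← hw] at h2
  rw [← hw, norm_smul, hu, mul_one] at h1
  rw [map_smul, norm_smul, hw'A] at h2
  exact (mul_self_inj (norm_nonneg _) (by positivity)).1 (by linear_combination h2 - ‖A u‖ ^ 2 * h1)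

end OrthogonalityPreserving

section Similarity

variable {𝕜 E F : Type*} [RCLike 𝕜] [NormedAddCommGroup E] [InnerProductSpace 𝕜 E]
  [NormedAddCommGroup F] [InnerProductSpace 𝕜 F] {A : E →L[𝕜] F} {c : ℝ}

lemma ContinuousLinearMap.norm_eq_of_norm_apply_eq_mul (hc : 0 ≤ c) (h : ∀ w, ‖A w‖ = c * ‖w‖)
    {x : E} (hx : ‖x‖ = 1) : ‖A‖ = c :=
  le_antisymm (opNorm_le_bound _ hc fun w => (h w).le) (by simpa [h, hx] using A.le_opNorm x)

lemma ContinuousLinearMap.adjoint_comp_self_eq_of_norm_apply_eq_mul [CompleteSpace E]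
    [CompleteSpace F] (hc : 0 < c) (h : ∀ w, ‖A w‖ = c * ‖w‖) :
    adjoint A ∘L A = (c : 𝕜) ^ 2 • 1 := by
  have hc' : (c : 𝕜) ≠ 0 := RCLike.ofReal_ne_zero.2 hc.ne'
  have hiso := (norm_map_iff_adjoint_comp_self ((c : 𝕜)⁻¹ • A)).1 fun w => by
    simp [norm_smul, h, hc.ne', abs_of_pos hc]
  rw [LinearIsometryEquiv.map_smulₛₗ, smul_comp, comp_smul, smul_smul, map_inv₀,
    RCLike.conj_ofReal] at hiso
  calc adjoint A ∘L A = ((c : 𝕜) ^ 2 * ((c : 𝕜)⁻¹ * (c : 𝕜)⁻¹)) • (adjoint A ∘L A) := by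
        rw [← mul_inv, ← sq, mul_inv_cancel₀ (pow_ne_zero 2 hc'), one_smul]
    _ = (c : 𝕜) ^ 2 • 1 := by rw [mul_smul, hiso]

end Similarity

section Preserver

variable {𝕜 H : Type*} [RCLike 𝕜] [NormedAddCommGroup H] [InnerProductSpace 𝕜 H]
  [CompleteSpace H] {φ : 𝕜 →+ 𝕜} {T : H →L[𝕜] H} {x v : H}

lemma rankOne_mul (x y : H) (T : H →L[𝕜] H) : rankOne 𝕜 x y * T = rankOne 𝕜 x (adjoint T y) :=
  rankOne_comp x y T

lemma adjoint_apply_ne_zero_of_isUnit (hT : IsUnit T) (hx : x ≠ 0) : adjoint T x ≠ 0 :=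
  (map_ne_zero_iff _ (isUnit_iff_bijective.1 hT.star).1).2 hx

theorem inner_adjoint_eq_zero_of_preservesMutualBJ
    (hΦ : PreservesMutualBJ fun a : 𝕜 × (H →L[𝕜] H) => (φ a.1, a.2 * T)) (hT : IsUnit T)
    (hx : ‖x‖ = 1) (hv : ‖v‖ = 1) (hxv : ⟪x, v⟫_𝕜 = 0)
    {f g : H} (hf : ‖f‖ = 1) (hg : ‖g‖ = 1) (hfg : ⟪f, g⟫_𝕜 = 0) :
    ⟪adjoint T f, adjoint T g⟫_𝕜 = 0 := by
  set B := rankOne 𝕜 x f + rankOne 𝕜 v g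
  have hBg : B g = v := by simp [B, hfg, inner_self_eq_norm_sq_to_K, hg]
  have hab : MutualBJ ((1 : 𝕜), rankOne 𝕜 x x) (0, B) := by
    refine ⟨strongBJ_of_norm_le_fst (by simp [hx]) rfl,
      strongBJ_of_norm_le_norm_apply hg ?_ fun y => ?_⟩
    · simpa [hBg, hv] using norm_rankOne_add_rankOne_le hx hv hxv hf hg hfg
    · simp [hBg, inner_smul_right, inner_eq_zero_symm.1 hxv]
  have hp : ⟪adjoint T x, adjoint T x⟫_𝕜 ≠ 0 := inner_self_ne_zero.2 <|
    adjoint_apply_ne_zero_of_isUnit hT (norm_ne_zero_iff.1 (hx ▸ one_ne_zero))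
  -- right multiplication by `C` cancels the `x`-row of `B * T`
  set C := -((⟪adjoint T x, adjoint T x⟫_𝕜)⁻¹ • rankOne 𝕜 (adjoint T x) (adjoint T f))
  have hkill : (φ 0, B * T) + (φ 1, rankOne 𝕜 x x * T) * (0, C) =
      (0, rankOne 𝕜 v (adjoint T g)) := by
    refine Prod.ext (by simp) ?_
    simp only [Prod.snd_add, Prod.snd_mul, B, C, add_mul, rankOne_mul _ _ T, mul_neg,
      mul_smul_comm, mul_def, rankOne_comp_rankOne, smul_smul, inv_mul_cancel₀ hp, one_smul]
    abel
  refine inner_eq_zero_of_norm_rankOne_add_rankOne_le hx hv hxv ?_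
  calc ‖rankOne 𝕜 x (adjoint T f) + rankOne 𝕜 v (adjoint T g)‖ = ‖(φ 0, B * T).2‖ := by
        simp only [B, add_mul, rankOne_mul]
    _ ≤ ‖(φ 0, B * T)‖ := norm_snd_le _
    _ ≤ _ := (hΦ _ _ hab).2 (0, C)
    _ = ‖adjoint T g‖ := by rw [hkill]; simp [hv]

theorem norm_le_of_preservesMutualBJ
    (hΦ : PreservesMutualBJ fun a : 𝕜 × (H →L[𝕜] H) => (φ a.1, a.2 * T))
    (hx : ‖x‖ = 1) (hv : ‖v‖ = 1) (hxv : ⟪x, v⟫_𝕜 = 0) (z : 𝕜) :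
    ‖φ z‖ ≤ ‖adjoint T x‖ * ‖z‖ := by
  have hab : MutualBJ (z, (‖z‖ : 𝕜) • rankOne 𝕜 x x) (z, (‖z‖ : 𝕜) • rankOne 𝕜 v v) :=
    ⟨strongBJ_smul_rankOne_self hx hxv z z,
      strongBJ_smul_rankOne_self hv (inner_eq_zero_symm.1 hxv) z z⟩
  calc ‖φ z‖ ≤ ‖(φ z, ((‖z‖ : 𝕜) • rankOne 𝕜 x x) * T)‖ :=
        norm_fst_le (φ z, ((‖z‖ : 𝕜) • rankOne 𝕜 x x) * T)
    _ ≤ _ := (hΦ _ _ hab).1 (-1, 0)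
    _ = ‖adjoint T x‖ * ‖z‖ := by simp [rankOne_mul, norm_smul, hx, mul_comm]; positivity

theorem le_norm_of_preservesMutualBJ
    (hΦ : PreservesMutualBJ fun a : 𝕜 × (H →L[𝕜] H) => (φ a.1, a.2 * T))
    (hx : ‖x‖ = 1) (hv : ‖v‖ = 1) (hxv : ⟪x, v⟫_𝕜 = 0) (hTx : adjoint T x ≠ 0)
    (hTvx : ⟪adjoint T v, adjoint T x⟫_𝕜 = 0) (z : 𝕜) :
    ‖adjoint T x‖ * ‖z‖ ≤ ‖φ z‖ := by
  set B := rankOne 𝕜 x x + rankOne 𝕜 v v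
  have hBv : B v = v := by simp [B, hxv, inner_self_eq_norm_sq_to_K, hv]
  have hab : MutualBJ (z, (‖z‖ : 𝕜) • rankOne 𝕜 x x) (0, B) := by
    refine ⟨strongBJ_of_norm_le_fst (by simp [norm_smul, hx]) rfl,
      strongBJ_of_norm_le_norm_apply hv ?_ fun y => ?_⟩
    · simpa [hBv, hv] using norm_rankOne_add_rankOne_le hx hv hxv hx hv hxv
    · simp [hBv, inner_smul_right, inner_eq_zero_symm.1 hxv]
  have hp : ⟪adjoint T x, adjoint T x⟫_𝕜 ≠ 0 := inner_self_ne_zero.2 hTx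
  set C := -((‖z‖ : 𝕜) • (⟪adjoint T x, adjoint T x⟫_𝕜)⁻¹ •
    rankOne 𝕜 (adjoint T x) (adjoint T x))
  have hkill : (φ z, ((‖z‖ : 𝕜) • rankOne 𝕜 x x) * T) + (φ 0, B * T) * (0, C) = (φ z, 0) := by
    refine Prod.ext (by simp) ?_
    simp only [Prod.snd_add, Prod.snd_mul, B, C, add_mul, smul_mul_assoc, rankOne_mul _ _ T,
      mul_neg, mul_smul_comm, mul_def, rankOne_comp_rankOne, hTvx, zero_smul, add_zero, smul_smul,
      mul_assoc, inv_mul_cancel₀ hp, mul_one, add_neg_cancel]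
  calc ‖adjoint T x‖ * ‖z‖ = ‖(φ z, ((‖z‖ : 𝕜) • rankOne 𝕜 x x) * T).2‖ := by
        simp [rankOne_mul, norm_smul, hx, mul_comm]
    _ ≤ ‖(φ z, ((‖z‖ : 𝕜) • rankOne 𝕜 x x) * T)‖ := norm_snd_le _
    _ ≤ _ := (hΦ _ _ hab).1 (0, C)
    _ = ‖φ z‖ := by rw [hkill]; simp

theorem norm_adjoint_apply_of_preservesMutualBJ
    (hΦ : PreservesMutualBJ fun a : 𝕜 × (H →L[𝕜] H) => (φ a.1, a.2 * T)) (hT : IsUnit T)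
    (hx : ‖x‖ = 1) (hv : ‖v‖ = 1) (hxv : ⟪x, v⟫_𝕜 = 0) (w : H) :
    ‖adjoint T w‖ = ‖adjoint T x‖ * ‖w‖ :=
  (adjoint T : H →ₗ[𝕜] H).norm_map_eq_mul_norm_of_inner_eq_zero
    (fun _ _ => LinearMap.inner_map_map_eq_zero_of_orthonormal fun _ _ hf hg hfg =>
      inner_adjoint_eq_zero_of_preservesMutualBJ hΦ hT hx hv hxv hf hg hfg) hx w

theorem norm_eq_norm_adjoint_apply_of_preservesMutualBJ
    (hΦ : PreservesMutualBJ fun a : 𝕜 × (H →L[𝕜] H) => (φ a.1, a.2 * T)) (hT : IsUnit T)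
    (hx : ‖x‖ = 1) (hv : ‖v‖ = 1) (hxv : ⟪x, v⟫_𝕜 = 0) :
    ‖T‖ = ‖adjoint T x‖ := by
  rw [← LinearIsometryEquiv.norm_map adjoint]
  exact norm_eq_of_norm_apply_eq_mul (norm_nonneg _)
    (norm_adjoint_apply_of_preservesMutualBJ hΦ hT hx hv hxv) hx

theorem mul_adjoint_eq_of_preservesMutualBJ
    (hΦ : PreservesMutualBJ fun a : 𝕜 × (H →L[𝕜] H) => (φ a.1, a.2 * T)) (hT : IsUnit T)
    (hx : ‖x‖ = 1) (hv : ‖v‖ = 1) (hxv : ⟪x, v⟫_𝕜 = 0) :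
    T * adjoint T = (‖T‖ : 𝕜) ^ 2 • 1 := by
  have hTx := adjoint_apply_ne_zero_of_isUnit hT (norm_ne_zero_iff.1 (hx ▸ one_ne_zero))
  have h := adjoint_comp_self_eq_of_norm_apply_eq_mul (norm_pos_iff.2 hTx)
    (norm_adjoint_apply_of_preservesMutualBJ hΦ hT hx hv hxv)
  rwa [adjoint_adjoint, ← mul_def,
    ← norm_eq_norm_adjoint_apply_of_preservesMutualBJ hΦ hT hx hv hxv] at h

theorem norm_apply_of_preservesMutualBJ
    (hΦ : PreservesMutualBJ fun a : 𝕜 × (H →L[𝕜] H) => (φ a.1, a.2 * T)) (hT : IsUnit T)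
    (hx : ‖x‖ = 1) (hv : ‖v‖ = 1) (hxv : ⟪x, v⟫_𝕜 = 0) (z : 𝕜) :
    ‖φ z‖ = ‖T‖ * ‖z‖ := by
  have hTx := adjoint_apply_ne_zero_of_isUnit hT (norm_ne_zero_iff.1 (hx ▸ one_ne_zero))
  have hTvx := inner_adjoint_eq_zero_of_preservesMutualBJ hΦ hT hx hv hxv hv hx
    (inner_eq_zero_symm.1 hxv)
  rw [norm_eq_norm_adjoint_apply_of_preservesMutualBJ hΦ hT hx hv hxv]
  exact le_antisymm (norm_le_of_preservesMutualBJ hΦ hx hv hxv z)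
    (le_norm_of_preservesMutualBJ hΦ hx hv hxv hTx hTvx z)

end Preserver

lemma Matrix.exists_mem_unitaryGroup_smul_eq {n 𝕜 : Type*} [Fintype n] [DecidableEq n] [RCLike 𝕜]
    {Q : Matrix n n 𝕜} {c : ℝ} (hc : c ≠ 0) (h : Q * star Q = (c : 𝕜) ^ 2 • 1) :
    ∃ (a : 𝕜) (U : Matrix n n 𝕜), U ∈ unitaryGroup n 𝕜 ∧ Q = a • U := by
  have hc' : (c : 𝕜) ≠ 0 := RCLike.ofReal_ne_zero.2 hc
  refine ⟨c, (c : 𝕜)⁻¹ • Q, ?_, by rw [smul_smul, mul_inv_cancel₀ hc', one_smul]⟩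
  rw [mem_unitaryGroup_iff, star_smul, smul_mul_smul_comm, h, smul_smul, RCLike.star_def,
    map_inv₀, RCLike.conj_ofReal, ← mul_inv, ← sq, inv_mul_cancel₀ (pow_ne_zero 2 hc'),
    one_smul]

lemma AddMonoidHom.eq_id_or_eq_conj_of_norm_map (ψ : ℂ →+ ℂ) (h : ∀ z, ‖ψ z‖ = ‖z‖)
    (h1 : ψ 1 = 1) : (∀ z, ψ z = z) ∨ ∀ z, ψ z = conj z := by
  have hψ : Continuous ψ := AddMonoidHomClass.continuous_of_bound ψ 1 (by simp [h])
  let f : ℂ →ₗᵢ[ℝ] ℂ := { (ψ.toRealLinearMap hψ).toLinearMap with norm_map' := h }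
  rcases linear_isometry_complex_aux (f := f.toLinearIsometryEquiv rfl) h1 with hf | hf
  · exact .inl fun z => DFunLike.congr_fun hf z
  · exact .inr fun z => DFunLike.congr_fun hf z

lemma AddMonoidHom.eq_mul_or_eq_mul_conj_of_norm_map (φ : ℂ →+ ℂ) {c : ℝ} (hc : 0 < c)
    (h : ∀ z, ‖φ z‖ = c * ‖z‖) : (∀ z, φ z = φ 1 * z) ∨ ∀ z, φ z = φ 1 * conj z := by
  have h1 : φ 1 ≠ 0 := by simp [← norm_ne_zero_iff, h, hc.ne']
  have hψ := ((AddMonoidHom.mulLeft (φ 1)⁻¹).comp φ).eq_id_or_eq_conj_of_norm_map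
    (fun z => by simp [h, hc.ne']) (by simp [h1])
  simpa only [comp_apply, coe_mulLeft, inv_mul_eq_iff_eq_mul₀ h1] using hψ

theorem stmt12 {n : ℕ} (hn : 2 ≤ n) (φ₁ : ℂ → ℂ)
    (hφadd : ∀ x y : ℂ, φ₁ (x + y) = φ₁ x + φ₁ y)
    (Q : Matrix (Fin n) (Fin n) ℂ) (hQ : IsUnit Q)
    (hpres : ∀ a b : ℂ × Matrix (Fin n) (Fin n) ℂ,
      MutualBJ a b → MutualBJ (φ₁ a.1, a.2 * Q) (φ₁ b.1, b.2 * Q)) :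
    (∃ (c : ℂ) (U : Matrix (Fin n) (Fin n) ℂ),
        U ∈ Matrix.unitaryGroup (Fin n) ℂ ∧ Q = c • U) ∧
    ‖Q‖ = ‖φ₁ 1‖ ∧
    ((∀ z : ℂ, φ₁ z = φ₁ 1 * z) ∨ (∀ z : ℂ, φ₁ z = φ₁ 1 * (starRingEnd ℂ) z)) := by
  have : NeZero n := ⟨by omega⟩
  set φ : ℂ →+ ℂ := .mk' φ₁ hφadd
  have hΦ := preservesMutualBJ_toEuclideanCLM (φ := φ) hpres
  have hT : IsUnit (toEuclideanCLM (n := Fin n) (𝕜 := ℂ) Q) := hQ.map _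
  have hon := (EuclideanSpace.basisFun (Fin n) ℂ).orthonormal
  have hx := hon.1 ⟨0, by omega⟩
  have hv := hon.1 ⟨1, by omega⟩
  have hxv := hon.2 (i := ⟨0, by omega⟩) (j := ⟨1, by omega⟩) (by simp)
  have hφ : ∀ z, ‖φ z‖ = ‖Q‖ * ‖z‖ := norm_apply_of_preservesMutualBJ hΦ hT hx hv hxv
  have hQQ : Q * star Q = (‖Q‖ : ℂ) ^ 2 • 1 := by
    refine EquivLike.injective (toEuclideanCLM (n := Fin n) (𝕜 := ℂ)) ?_
    rw [map_mul, map_star, map_smul, map_one, star_eq_adjoint]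
    exact mul_adjoint_eq_of_preservesMutualBJ hΦ hT hx hv hxv
  have hQ0 : 0 < ‖Q‖ := norm_pos_iff.2 hQ.ne_zero
  exact ⟨Matrix.exists_mem_unitaryGroup_smul_eq hQ0.ne' hQQ, ((hφ 1).trans (by simp)).symm,
    φ.eq_mul_or_eq_mul_conj_of_norm_map hQ0 hφ⟩
end

section
/- Let A, B ∈ M_n(ℂ) and suppose A has rank one. Then A and B are mutually strongly Birkhoff–James orthogonal if and only if A*B = 0 (where A* is the conjugate transpose of A). -/
open Matrix
open scoped Matrix.Norms.L2Operator

/-!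
If `a⋆ b = 0`, then `(a + b c)⋆ (a + b c) = a⋆ a + (b c)⋆ (b c) ≥ a⋆ a`, so the C⋆-identity
gives `‖a + b c‖ ≥ ‖a‖`; this direction holds in every C⋆-algebra.

Conversely, view the rank-one matrix `A` as the operator `x ⊗ y⋆`. Testing `A ⊥ˢ B` against
`C = t (z ⊗ y⋆)` with `z = B⋆ x` gives `‖x‖ ≤ ‖x + t B z‖` for all real `t`, which forces
`Re ⟪x, B z⟫ = ‖z‖² = 0`. Hence `B⋆ x = 0` and `A⋆ B = y ⊗ (B⋆ x)⋆ = 0`.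
-/

open InnerProductSpace ContinuousLinearMap

theorem StrongBJ.map_s15 {R S F : Type*} [NormedRing R] [NormedRing S] [EquivLike F R S]
    [RingEquivClass F R S] (e : F) (he : ∀ a, ‖e a‖ = ‖a‖) {a b : R} (h : StrongBJ a b) :
    StrongBJ (e a) (e b) := by
  intro c
  obtain ⟨c, rfl⟩ := EquivLike.surjective e c
  rw [← map_mul, ← map_add, he, he]
  exact h c

theorem strongBJ_of_star_mul_eq_zero {𝔄 : Type*} [CStarAlgebra 𝔄] [PartialOrder 𝔄]
    [StarOrderedRing 𝔄] {a b : 𝔄} (h : star a * b = 0) : StrongBJ a b := by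
  intro c
  have hcross : star (a + b * c) * (a + b * c) = star a * a + star (b * c) * (b * c) := by
    have h' : star (b * c) * a = 0 :=
      calc star (b * c) * a = star (star a * b * c) := by simp only [star_mul, star_star, mul_assoc]
        _ = 0 := by rw [h, zero_mul, star_zero]
    rw [star_add, add_mul, mul_add, mul_add, ← mul_assoc, h, zero_mul, h', add_zero, zero_add]
  have hle : ‖star a * a‖ ≤ ‖star (a + b * c) * (a + b * c)‖ := by
    rw [hcross]
    exact CStarAlgebra.norm_le_norm_of_nonneg_of_le (star_mul_self_nonneg a)
      (le_add_of_nonneg_right (star_mul_self_nonneg _))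
  rw [CStarRing.norm_star_mul_self, CStarRing.norm_star_mul_self] at hle
  exact (mul_self_le_mul_self_iff (norm_nonneg _) (norm_nonneg _)).mpr hle

theorem re_inner_eq_zero_of_forall_norm_le_norm_add_smul {𝕜 E : Type*} [RCLike 𝕜]
    [NormedAddCommGroup E] [InnerProductSpace 𝕜 E] {x y : E}
    (h : ∀ t : ℝ, ‖x‖ ≤ ‖x + (t : 𝕜) • y‖) : RCLike.re (inner 𝕜 x y) = 0 := by
  set r := RCLike.re (inner 𝕜 x y)
  have hquad : ∀ t : ℝ, 0 ≤ ‖y‖ ^ 2 * (t * t) + 2 * r * t + 0 := by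
    intro t
    have hsq := pow_le_pow_left₀ (norm_nonneg x) (h t) 2
    rw [norm_add_sq (𝕜 := 𝕜), inner_smul_right, RCLike.re_ofReal_mul, norm_smul,
      RCLike.norm_ofReal, mul_pow, sq_abs] at hsq
    linarith
  have hdisc := discrim_le_zero hquad
  rw [discrim] at hdisc
  nlinarith [sq_nonneg r]

theorem star_rankOne_mul_eq_zero_of_strongBJ {𝕜 E : Type*} [RCLike 𝕜] [NormedAddCommGroup E]
    [InnerProductSpace 𝕜 E] [CompleteSpace E] {x y : E} {b : E →L[𝕜] E}
    (h : StrongBJ (rankOne 𝕜 x y) b) : star (rankOne 𝕜 x y) * b = 0 := by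
  rw [star_eq_adjoint, adjoint_rankOne, mul_def, rankOne_comp]
  by_cases hy : y = 0
  · simp [hy]
  set z := adjoint b x
  have hnorm : ∀ t : ℝ, ‖x‖ ≤ ‖x + (t : 𝕜) • b z‖ := by
    intro t
    have hsum :
        rankOne 𝕜 x y + b * rankOne 𝕜 ((t : 𝕜) • z) y = rankOne 𝕜 (x + (t : 𝕜) • b z) y := by
      rw [mul_def, comp_rankOne, map_smul, map_add, map_smul, _root_.add_apply]
    have := h (rankOne 𝕜 ((t : 𝕜) • z) y)
    rw [hsum, norm_rankOne, norm_rankOne] at this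
    exact le_of_mul_le_mul_right this (norm_pos_iff.mpr hy)
  have hz : RCLike.re (inner 𝕜 x (b z)) = ‖z‖ ^ 2 := by
    rw [← adjoint_inner_left, inner_self_eq_norm_sq]
  have hz0 : z = 0 := by
    simpa [re_inner_eq_zero_of_forall_norm_le_norm_add_smul hnorm] using hz.symm
  simp [hz0]

theorem Matrix.exists_eq_vecMulVec_of_rank_le_one {m n K : Type*} [Fintype n] [DecidableEq n]
    [Field K] {A : Matrix m n K} (hA : A.rank ≤ 1) : ∃ u v, A = vecMulVec u v := by
  obtain ⟨u, hu⟩ := finrank_le_one_iff.mp hA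
  choose v hv using fun j => hu ⟨A.col j, Pi.single j 1, A.mulVec_single_one j⟩
  refine ⟨u, v, Matrix.ext fun i j => ?_⟩
  have hcol : v j • u = A.col j := congrArg Subtype.val (hv j)
  simpa [vecMulVec_apply, mul_comm] using (congrFun hcol i).symm

theorem Matrix.exists_toEuclideanCLM_eq_rankOne_of_rank_le_one {n 𝕜 : Type*} [RCLike 𝕜]
    [Fintype n] [DecidableEq n] {A : Matrix n n 𝕜} (hA : A.rank ≤ 1) :
    ∃ x y, toEuclideanCLM (𝕜 := 𝕜) A = rankOne 𝕜 x y := by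
  obtain ⟨u, v, rfl⟩ := exists_eq_vecMulVec_of_rank_le_one hA
  refine ⟨WithLp.toLp 2 u, WithLp.toLp 2 (star v), ContinuousLinearMap.coe_injective ?_⟩
  rw [coe_toEuclideanCLM_eq_toEuclideanLin, ← LinearEquiv.eq_symm_apply,
    symm_toEuclideanLin_rankOne]
  simp

open scoped MatrixOrder in
theorem stmt15 {n : ℕ} (A B : Matrix (Fin n) (Fin n) ℂ) (hA : A.rank = 1) :
    MutualBJ A B ↔ Aᴴ * B = 0 := by
  constructor
  · rintro ⟨hAB, -⟩
    obtain ⟨x, y, hxy⟩ := exists_toEuclideanCLM_eq_rankOne_of_rank_le_one hA.le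
    have hT := hAB.map_s15 toEuclideanCLM l2_opNorm_toEuclideanCLM
    rw [hxy] at hT
    apply EquivLike.injective (toEuclideanCLM (n := Fin n) (𝕜 := ℂ))
    rw [map_mul, map_zero, ← star_eq_conjTranspose, map_star, hxy]
    exact star_rankOne_mul_eq_zero_of_strongBJ hT
  · intro h
    have h' : star B * A = 0 := by
      rw [star_eq_conjTranspose]
      simpa using congrArg conjTranspose h
    exact ⟨strongBJ_of_star_mul_eq_zero h, strongBJ_of_star_mul_eq_zero h'⟩
end

section
/- For two nonzero elements (λ_1, μ_1) and (λ_2, μ_2) of the C*-algebra ℂ ⊕ ℂ, they are mutually strongly Birkhoff–James orthogonal if and only if (λ_1 = 0 and μ_2 = 0) or (μ_1 = 0 and λ_2 = 0). -/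
lemma bj_zero (a b : ℂ × ℂ) (h : StrongBJ a b) (h1 : b.1 ≠ 0) (h2 : b.2 ≠ 0) :
    a = 0 := by
  have key := h (-a.1 / b.1, -a.2 / b.2)
  have e : a + b * (-a.1 / b.1, -a.2 / b.2) = 0 := by
    ext
    · show a.1 + b.1 * (-a.1 / b.1) = 0
      field_simp; ring
    · show a.2 + b.2 * (-a.2 / b.2) = 0
      field_simp; ring
  rw [e, norm_zero] at key
  exact norm_le_zero_iff.mp key

lemma bj_le2 (a b : ℂ × ℂ) (h : StrongBJ a b) (h2 : b.2 ≠ 0) : ‖a.2‖ ≤ ‖a.1‖ := by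
  have key := h (0, -a.2 / b.2)
  have e : a + b * (0, -a.2 / b.2) = (a.1, 0) := by
    ext
    · show a.1 + b.1 * 0 = a.1; ring
    · show a.2 + b.2 * (-a.2 / b.2) = 0; field_simp; ring
  rw [e] at key
  have h1 : ‖a.2‖ ≤ ‖a‖ := by
    rw [Prod.norm_def]; exact le_max_right _ _
  have h3 : ‖((a.1, 0) : ℂ × ℂ)‖ = ‖a.1‖ := by
    simp [Prod.norm_def]
  rw [h3] at key
  exact h1.trans key

lemma bj_le1 (a b : ℂ × ℂ) (h : StrongBJ a b) (h1 : b.1 ≠ 0) : ‖a.1‖ ≤ ‖a.2‖ := by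
  have key := h (-a.1 / b.1, 0)
  have e : a + b * (-a.1 / b.1, 0) = (0, a.2) := by
    ext
    · show a.1 + b.1 * (-a.1 / b.1) = 0; field_simp; ring
    · show a.2 + b.2 * 0 = a.2; ring
  rw [e] at key
  have ha : ‖a.1‖ ≤ ‖a‖ := by
    rw [Prod.norm_def]; exact le_max_left _ _
  have h3 : ‖((0, a.2) : ℂ × ℂ)‖ = ‖a.2‖ := by
    simp [Prod.norm_def]
  rw [h3] at key
  exact ha.trans key

lemma bj_of (a b : ℂ × ℂ) (ha1 : a.1 = 0) (hb2 : b.2 = 0) : StrongBJ a b := by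
  intro c
  have e1 : (a + b * c).2 = a.2 := by
    show a.2 + b.2 * c.2 = a.2
    rw [hb2]; ring
  have : ‖a‖ = ‖a.2‖ := by
    rw [Prod.norm_def, ha1]; simp
  rw [this]
  calc ‖a.2‖ = ‖(a + b * c).2‖ := by rw [e1]
    _ ≤ ‖a + b * c‖ := by rw [Prod.norm_def]; exact le_max_right _ _

lemma bj_of' (a b : ℂ × ℂ) (ha2 : a.2 = 0) (hb1 : b.1 = 0) : StrongBJ a b := by
  intro c
  have e1 : (a + b * c).1 = a.1 := by
    show a.1 + b.1 * c.1 = a.1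
    rw [hb1]; ring
  have : ‖a‖ = ‖a.1‖ := by
    rw [Prod.norm_def, ha2]; simp
  rw [this]
  calc ‖a.1‖ = ‖(a + b * c).1‖ := by rw [e1]
    _ ≤ ‖a + b * c‖ := by rw [Prod.norm_def]; exact le_max_left _ _

theorem stmt16 (a b : ℂ × ℂ) (ha : a ≠ 0) (hb : b ≠ 0) :
    MutualBJ a b ↔ (a.1 = 0 ∧ b.2 = 0) ∨ (a.2 = 0 ∧ b.1 = 0) := by
  constructor
  · rintro ⟨hab, hba⟩
    by_cases hb1 : b.1 = 0
    · have hb2 : b.2 ≠ 0 := by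
        intro h2; exact hb (Prod.ext hb1 h2)
      by_cases ha1 : a.1 = 0
      · exfalso
        have := bj_le2 a b hab hb2
        rw [ha1, norm_zero] at this
        have ha2 : a.2 = 0 := norm_le_zero_iff.mp this
        exact ha (Prod.ext ha1 ha2)
      · right
        refine ⟨?_, hb1⟩
        by_contra ha2
        exact hb (bj_zero b a hba ha1 ha2)
    · have hb2 : b.2 = 0 := by
        by_contra h2
        exact ha (bj_zero a b hab hb1 h2)
      by_cases ha2 : a.2 = 0
      · exfalso
        have := bj_le1 a b hab hb1
        rw [ha2, norm_zero] at this
        have ha1 : a.1 = 0 := norm_le_zero_iff.mp this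
        exact ha (Prod.ext ha1 ha2)
      · left
        refine ⟨?_, hb2⟩
        by_contra ha1
        exact hb (bj_zero b a hba ha1 ha2)
  · rintro (⟨ha1, hb2⟩ | ⟨ha2, hb1⟩)
    · exact ⟨bj_of a b ha1 hb2, bj_of' b a hb2 ha1⟩
    · exact ⟨bj_of' a b ha2 hb1, bj_of b a hb1 ha2⟩
end

section
/- The additive (indeed linear) map Φ : ℂ ⊕ ℂ → ℂ ⊕ ℂ defined by Φ(λ, μ) = (λ, λ) preserves mutual strong Birkhoff–James orthogonality (if a ⊥⊥ b then Φ(a) ⊥⊥ Φ(b)), yet it maps the singular element (1, 0) to the invertible element (1, 1); in particular Φ does not map singular elements to singular elements. -/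
/-- The map `Φ(λ, μ) = (λ, λ)` on `ℂ ⊕ ℂ`. -/
def Phi : ℂ × ℂ → ℂ × ℂ := fun p => (p.1, p.1)

lemma strongBJ_zero_left {𝔄 : Type*} [NormedRing 𝔄] (b : 𝔄) : StrongBJ 0 b := by
  intro c
  simp

lemma strongBJ_zero_right {𝔄 : Type*} [NormedRing 𝔄] (a : 𝔄) : StrongBJ a 0 := by
  intro c
  simp

lemma key (a b : ℂ × ℂ) (h : MutualBJ a b) : a.1 = 0 ∨ b.1 = 0 := by
  by_contra hc
  push_neg at hc
  obtain ⟨ha1, hb1⟩ := hc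
  by_cases hb2 : b.2 = 0
  · -- use c = (-b.1/a.1, 0) in StrongBJ b a
    have := h.2 (-b.1 / a.1, 0)
    have hzero : b + a * (-b.1 / a.1, 0) = 0 := by
      ext
      · simp [Prod.mul_def]
        field_simp
        ring
      · simp [Prod.mul_def, hb2]
    rw [hzero] at this
    simp only [norm_zero] at this
    have hb : b = 0 := norm_le_zero_iff.mp this
    exact hb1 (by rw [hb]; rfl)
  · -- use c = (-a.1/b.1, -a.2/b.2) in StrongBJ a b
    have := h.1 (-a.1 / b.1, -a.2 / b.2)
    have hzero : a + b * (-a.1 / b.1, -a.2 / b.2) = 0 := by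
      ext
      · simp [Prod.mul_def]
        field_simp
        ring
      · simp [Prod.mul_def]
        field_simp
        ring
    rw [hzero] at this
    simp only [norm_zero] at this
    have ha : a = 0 := norm_le_zero_iff.mp this
    exact ha1 (by rw [ha]; rfl)

lemma mutual_zero_left (x : ℂ × ℂ) : MutualBJ 0 x :=
  ⟨strongBJ_zero_left x, strongBJ_zero_right x⟩

lemma mutual_zero_right (x : ℂ × ℂ) : MutualBJ x 0 :=
  ⟨strongBJ_zero_right x, strongBJ_zero_left x⟩

theorem stmt17 :
    (∀ a b : ℂ × ℂ, MutualBJ a b → MutualBJ (Phi a) (Phi b)) ∧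
      ¬ IsUnit ((1, 0) : ℂ × ℂ) ∧ IsUnit (Phi (1, 0)) := by
  refine ⟨fun a b h => ?_, ?_, ?_⟩
  · rcases key a b h with h1 | h1
    · have : Phi a = 0 := by simp [Phi, h1, Prod.ext_iff]
      rw [this]; exact mutual_zero_left _
    · have : Phi b = 0 := by simp [Phi, h1, Prod.ext_iff]
      rw [this]; exact mutual_zero_right _
  · intro h
    have := h.map (RingHom.snd ℂ ℂ)
    simp at this
  · have : Phi (1, 0) = 1 := by simp [Phi, Prod.ext_iff]
    rw [this]; exact isUnit_one
end

section
/- Let φ : ℂ → ℂ be an additive function that is not identically zero and satisfies: |φ(λ)| = |φ(μ)| whenever |λ| = |μ|, and |φ(μ)| ≤ |φ(λ)| whenever |μ| < |λ|. Then either φ(λ) = φ(1)·λ for all λ ∈ ℂ, or φ(λ) = φ(1)·conj(λ) for all λ ∈ ℂ. -/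
/-!
Additivity makes φ ℚ-linear, so ‖φ q‖ = q‖φ 1‖ for rationals q ≥ 0; since ‖φ z‖ is monotone in
‖z‖, squeezing ‖z‖ between rationals gives ‖φ z‖ = ‖z‖‖φ 1‖. Hence φ is Lipschitz, so ℝ-linear,
and if φ 1 ≠ 0 then z ↦ φ z / φ 1 is a real-linear isometry of ℂ fixing 1: the identity or
complex conjugation.
-/

open ComplexConjugate

theorem AddMonoidHom.norm_apply_eq_norm_mul_of_norm_mono {E F : Type*} [NormedAddCommGroup E]
    [NormedSpace ℝ E] [NormedAddCommGroup F] [NormedSpace ℝ F] (f : E →+ F)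
    (hf : ∀ x y : E, ‖y‖ < ‖x‖ → ‖f y‖ ≤ ‖f x‖) {e : E} (he : ‖e‖ = 1) (x : E) :
    ‖f x‖ = ‖x‖ * ‖f e‖ := by
  have hq : ∀ q : ℚ, 0 ≤ (q : ℝ) → ‖f ((q : ℝ) • e)‖ = q * ‖f e‖ ∧ ‖(q : ℝ) • e‖ = q := by
    intro q hq
    rw [map_ratCast_smul f ℝ ℝ q e, norm_smul, norm_smul, he, Real.norm_of_nonneg hq, mul_one]
    exact ⟨rfl, rfl⟩
  have hle : ∀ q : ℚ, ‖x‖ < q → ‖f x‖ ≤ q * ‖f e‖ := fun q hxq => by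
    obtain ⟨hfq, hnq⟩ := hq q ((norm_nonneg x).trans hxq.le)
    rw [← hfq]
    exact hf _ x (by rwa [hnq])
  have hge : ∀ q : ℚ, 0 ≤ (q : ℝ) → (q : ℝ) < ‖x‖ → q * ‖f e‖ ≤ ‖f x‖ := fun q hq0 hqx => by
    obtain ⟨hfq, hnq⟩ := hq q hq0
    rw [← hfq]
    exact hf x _ (by rwa [hnq])
  rcases (norm_nonneg (f e)).eq_or_lt with hc | hc
  · obtain ⟨q, hxq⟩ := exists_rat_gt ‖x‖
    simpa [← hc] using hle q hxq
  refine (div_eq_iff hc.ne').mp (le_antisymm ?_ ?_)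
  · exact le_of_forall_lt_rat_imp_le fun q hxq => (div_le_iff₀ hc).mpr (hle q hxq)
  · refine le_of_forall_rat_lt_imp_le fun q hqx => ?_
    rcases lt_or_ge (q : ℝ) 0 with hq0 | hq0
    · exact hq0.le.trans (by positivity)
    · exact (le_div_iff₀ hc).mpr (hge q hq0 hqx)

theorem Complex.linearMap_eq_mul_or_eq_mul_conj_of_norm_apply (g : ℂ →ₗ[ℝ] ℂ)
    (hg : ∀ z, ‖g z‖ = ‖z‖ * ‖g 1‖) :
    (∀ z, g z = g 1 * z) ∨ (∀ z, g z = g 1 * conj z) := by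
  by_cases h0 : g 1 = 0
  · left
    intro z
    simpa [h0] using hg z
  let ψ : ℂ →ₗᵢ[ℝ] ℂ :=
    { toLinearMap := (g 1)⁻¹ • g
      norm_map' := fun z => by
        simp only [LinearMap.smul_apply, smul_eq_mul, norm_mul, norm_inv, hg z]
        field_simp [norm_ne_zero_iff.mpr h0] }
  let e := ψ.toLinearIsometryEquiv rfl
  have he : ∀ z, g z = g 1 * e z := fun z => by
    simp [e, ψ, h0]
  rcases linear_isometry_complex_aux (f := e) (by simp [e, ψ, h0]) with h | h
  · exact .inl fun z => by rw [he, h]; rfl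
  · exact .inr fun z => by rw [he, h]; rfl

theorem stmt18_general (φ : ℂ → ℂ) (hadd : ∀ x y : ℂ, φ (x + y) = φ x + φ y)
    (h2 : ∀ z w : ℂ, ‖w‖ < ‖z‖ → ‖φ w‖ ≤ ‖φ z‖) :
    (∀ z : ℂ, φ z = φ 1 * z) ∨ (∀ z : ℂ, φ z = φ 1 * (starRingEnd ℂ) z) := by
  let f : ℂ →+ ℂ := AddMonoidHom.mk' φ hadd
  have hnorm : ∀ z, ‖f z‖ = ‖z‖ * ‖f 1‖ := f.norm_apply_eq_norm_mul_of_norm_mono h2 norm_one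
  have hcont : Continuous f :=
    AddMonoidHomClass.continuous_of_bound f ‖f 1‖ fun z => (hnorm z).trans_le (mul_comm _ _).le
  exact Complex.linearMap_eq_mul_or_eq_mul_conj_of_norm_apply (f.toRealLinearMap hcont) hnorm

theorem stmt18 (φ : ℂ → ℂ) (hadd : ∀ x y : ℂ, φ (x + y) = φ x + φ y) (hne : φ ≠ 0)
    (h1 : ∀ z w : ℂ, ‖z‖ = ‖w‖ → ‖φ z‖ = ‖φ w‖)
    (h2 : ∀ z w : ℂ, ‖w‖ < ‖z‖ → ‖φ w‖ ≤ ‖φ z‖) :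
    (∀ z : ℂ, φ z = φ 1 * z) ∨ (∀ z : ℂ, φ z = φ 1 * (starRingEnd ℂ) z) :=
  stmt18_general φ hadd h2
end

section
/- Let k ≥ 3 and let Φ = (φ_1,…,φ_k) : ℂ^k → ℂ^k be an additive map that preserves mutual strong Birkhoff–James orthogonality in one direction. Then for all λ, μ ∈ ℂ with |λ| = |μ| and all indices 1 ≤ i, j ≤ k, one has |φ_i(λ)| = |φ_j(μ)|; moreover, if |λ| > |μ| then |φ_j(λ)| ≥ |φ_i(μ)| for all 1 ≤ i, j ≤ k. -/
section Pi

variable {ι R : Type*} [Fintype ι] [NormedRing R]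

theorem strongBJ_of_apply_eq_zero {a b : ι → R} {i : ι} (ha : ‖a‖ ≤ ‖a i‖) (hb : b i = 0) :
    StrongBJ a b := fun c =>
  ha.trans <| by simpa [hb] using norm_le_pi_norm (a + b * c) i

variable [DecidableEq ι]

theorem mutualBJ_single_add_single {p q r : ι} (hpq : p ≠ q) (hpr : p ≠ r) (hqr : q ≠ r)
    {w w' : R} (hw : ‖w‖ ≤ ‖w'‖) :
    MutualBJ (Pi.single p w + Pi.single q w : ι → R) (Pi.single q w + Pi.single r w') := by
  constructor
  · refine strongBJ_of_apply_eq_zero (i := p) ?_ (by simp [hpq, hpr])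
    refine (pi_norm_le_iff_of_nonneg (norm_nonneg _)).2 fun i => ?_
    by_cases hip : i = p <;> by_cases hiq : i = q <;> simp_all
  · refine strongBJ_of_apply_eq_zero (i := r) ?_ (by simp [hpr.symm, hqr.symm])
    refine (pi_norm_le_iff_of_nonneg (norm_nonneg _)).2 fun i => ?_
    by_cases hiq : i = q <;> by_cases hir : i = r <;> simp_all

theorem norm_apply_le_of_mutualBJ_preserving {φ : ι → R → R} (hφ0 : ∀ i, φ i 0 = 0)
    (hpres : ∀ a b : ι → R, MutualBJ a b → MutualBJ (fun i => φ i (a i)) (fun i => φ i (b i)))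
    {p q r : ι} (hpq : p ≠ q) (hpr : p ≠ r) (hqr : q ≠ r) {w w' : R} (hw : ‖w‖ ≤ ‖w'‖) :
    ‖φ q w‖ ≤ ‖φ r w'‖ := by
  set a : ι → R := Pi.single p w + Pi.single q w
  set b : ι → R := Pi.single q w + Pi.single r w'
  have hcancel : (fun i => φ i (b i)) + (fun i => φ i (a i)) * -Pi.single q 1 =
      Pi.single r (φ r w') := by
    funext i
    by_cases hiq : i = q <;> by_cases hir : i = r <;>
      simp_all [a, b, Pi.single_apply, hpq.symm, hpr.symm]
  calc ‖φ q w‖ = ‖φ q (b q)‖ := by simp [b, hqr]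
    _ ≤ ‖fun i => φ i (b i)‖ := norm_le_pi_norm (fun i => φ i (b i)) q
    _ ≤ ‖(fun i => φ i (b i)) + (fun i => φ i (a i)) * -Pi.single q 1‖ :=
      (hpres a b (mutualBJ_single_add_single hpq hpr hqr hw)).2 _
    _ = ‖φ r w'‖ := by rw [hcancel, Pi.norm_single]

theorem norm_apply_le_of_three_le_card {φ : ι → R → R} (hφ0 : ∀ i, φ i 0 = 0)
    (hpres : ∀ a b : ι → R, MutualBJ a b → MutualBJ (fun i => φ i (a i)) (fun i => φ i (b i)))
    (hι : 3 ≤ Fintype.card ι) {w w' : R} (hw : ‖w‖ ≤ ‖w'‖) (i j : ι) :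
    ‖φ i w‖ ≤ ‖φ j w'‖ := by
  have hι' : 3 ≤ ENat.card ι := by simpa using hι
  have key {q r : ι} (hqr : q ≠ r) {x y : R} (hxy : ‖x‖ ≤ ‖y‖) : ‖φ q x‖ ≤ ‖φ r y‖ :=
    have ⟨p, hpq, hpr⟩ := ENat.exists_ne_ne_of_three_le hι' q r
    norm_apply_le_of_mutualBJ_preserving hφ0 hpres hpq hpr hqr hxy
  by_cases hij : i = j
  · subst hij
    obtain ⟨r, hri, -⟩ := ENat.exists_ne_ne_of_three_le hι' i i
    exact (key hri.symm le_rfl).trans (key hri hw)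
  · exact key hij hw

end Pi

theorem stmt19 {k : ℕ} (hk : 3 ≤ k) (φ : Fin k → ℂ → ℂ)
    (Φ : (Fin k → ℂ) → (Fin k → ℂ)) (hΦ : ∀ x i, Φ x i = φ i (x i))
    (hadd : ∀ x y, Φ (x + y) = Φ x + Φ y)
    (hpres : ∀ a b : Fin k → ℂ, MutualBJ a b → MutualBJ (Φ a) (Φ b)) :
    (∀ z w : ℂ, ‖z‖ = ‖w‖ →
      ∀ i j : Fin k, ‖φ i z‖ = ‖φ j w‖) ∧
    (∀ z w : ℂ, ‖w‖ < ‖z‖ →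
      ∀ i j : Fin k, ‖φ i w‖ ≤ ‖φ j z‖) := by
  obtain rfl : Φ = fun x i => φ i (x i) := funext₂ hΦ
  have hφ0 (i : Fin k) : φ i 0 = 0 := by
    simpa using congr_fun (hadd 0 0) i
  have key {w w' : ℂ} (hw : ‖w‖ ≤ ‖w'‖) (i j : Fin k) : ‖φ i w‖ ≤ ‖φ j w'‖ :=
    norm_apply_le_of_three_le_card hφ0 hpres (by simpa using hk) hw i j
  exact ⟨fun z w h i j => (key h.le i j).antisymm (key h.ge j i), fun z w h i j => key h.le i j⟩
end
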